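/- Let T be a set, let X ⊆ ℝ^T be an S-open subset that is also a linear subspace of ℝ^T (with pointwise vector operations), and let T' be a topology on X making X a topological vector space over ℝ. Then T' is coordinated with the family of Euclidean topologies on the factors ℝ, i.e. for every t ∈ T and every a ∈ X one has lim_{x→a_t} a_t^x = a in (X, T'), where the limit x → a_t is taken in ℝ with the Euclidean topology. -/

import Mathlib

open Function Filter Topology

/-- `Sigma1 x` (σ₁(x)): the set of points differing from `x` in at most one coordinate. -/
def Sigma1 {T : Type*} {X : T → Type*} (x : ∀ t, X t) : Set (∀ t, X t) :=
  {y | {t | y t ≠ x t}.Subsingleton}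

/-- A set `A` is `S`-open if `σ₁(x) ⊆ A` for every `x ∈ A`. -/
def SOpen {T : Type*} {X : T → Type*} (A : Set (∀ t, X t)) : Prop :=
  ∀ x ∈ A, Sigma1 x ⊆ A

theorem update_mem {T : Type*} [DecidableEq T] {X : T → Type*} {A : Set (∀ t, X t)}
    (hA : SOpen A) {x : ∀ t, X t} (hx : x ∈ A) (t : T) (v : X t) :
    Function.update x t v ∈ A := by
  apply hA x hx
  intro s hs s' hs'
  simp only [Set.mem_setOf_eq] at hs hs'
  have h1 : s = t := by
    by_contra h
    exact hs (Function.update_of_ne h v x)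
  have h2 : s' = t := by
    by_contra h
    exact hs' (Function.update_of_ne h v x)
  rw [h1, h2]

/-- The point `x_t^v`: `x` with its `t`-th coordinate replaced by `v`, as an element
of the `S`-open set `A`. -/
def updPt {T : Type*} [DecidableEq T] {X : T → Type*} {A : Set (∀ t, X t)}
    (hA : SOpen A) (x : ↥A) (t : T) (v : X t) : ↥A :=
  ⟨Function.update x.1 t v, update_mem hA x.2 t v⟩

/-- A topology `T'` on `A` is coordinated with the family of factor topologies:
for every `t` and `a ∈ A`, `lim_{v → a t} a_t^v = a` in `(A, T')`. -/
def Coordinated {T : Type*} [DecidableEq T] {X : T → Type*} [∀ t, TopologicalSpace (X t)]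
    {A : Set (∀ t, X t)} (hA : SOpen A) (T' : TopologicalSpace ↥A) : Prop :=
  ∀ (t : T) (a : ↥A), Filter.Tendsto (fun v : X t => updPt hA a t v)
    (nhds (a.1 t)) (@nhds _ T' a)

/-! S-openness puts the coordinate vector `e_t = 0_t^1` into `X`, and `a_t^x = a + (x - a_t) • e_t`;
this is a continuous function of `x` in any topological vector space topology, equal to `a`
at `x = a_t`. -/

theorem Function.update_eq_add_sub_smul {T R : Type*} [DecidableEq T] [Ring R] (x : T → R)
    (t : T) (v : R) : update x t v = x + (v - x t) • update (0 : T → R) t 1 := by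
  funext s
  rcases eq_or_ne s t with rfl | hs
  · simp
  · simp [update_of_ne hs]

theorem updPt_eq_add_sub_smul {T R : Type*} [DecidableEq T] [Ring R] {p : Submodule R (T → R)}
    (hA : SOpen (p : Set (T → R))) (a : p) (t : T) (v : R) :
    updPt hA a t v = a + (v - a.1 t) • updPt hA 0 t 1 :=
  Subtype.ext (update_eq_add_sub_smul a.1 t v)

theorem tendsto_add_sub_smul_nhds {𝕜 E : Type*} [Ring 𝕜] [TopologicalSpace 𝕜]
    [IsTopologicalAddGroup 𝕜] [AddCommGroup E] [Module 𝕜 E] [TopologicalSpace E]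
    [ContinuousAdd E] [ContinuousSMul 𝕜 E] (a e : E) (c : 𝕜) :
    Tendsto (fun v : 𝕜 => a + (v - c) • e) (𝓝 c) (𝓝 a) := by
  have hcont : Continuous fun v : 𝕜 => a + (v - c) • e := by fun_prop
  simpa using hcont.tendsto c

/-- If `p` is a linear subspace of `ℝ^T` that is S-open and `T'` is a topology making
`p` a topological vector space over `ℝ`, then `T'` is coordinated with the Euclidean
topologies on the factors. -/
theorem tvs_coordinated {T : Type*} [DecidableEq T] (p : Submodule ℝ (T → ℝ))
    (hA : SOpen (p : Set (T → ℝ))) (T' : TopologicalSpace ↥p)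
    (h1 : @IsTopologicalAddGroup ↥p T' _) (h2 : @ContinuousSMul ℝ ↥p _ _ T') :
    Coordinated hA T' := by
  let _ := T'
  intro t a
  simp only [updPt_eq_add_sub_smul hA a t]
  exact tendsto_add_sub_smul_nhds a _ _
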